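/- arXiv:math/0404258 — 2 statements merged into one kernel-verified Lean document; each statement's English description precedes it below -/
import Mathlib

section
/- The group G = { f : S → ℤ/2ℤ : ker(f) ∈ 𝔇 } has cardinality exactly 2^λ. -/
universe u

open Classical in
noncomputable def myF {α : Type u} (A : Set α) (v : Finset α) : ZMod 2 :=
  if ∃ x ∈ A, v = {x} then 1 else 0

open Classical in
lemma myF_singleton {α : Type u} (A : Set α) (x : α) :
    myF A {x} = if x ∈ A then 1 else 0 := by
  unfold myF
  congr 1
  simp only [eq_iff_iff]
  constructor
  · rintro ⟨y, hy, hxy⟩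
    obtain rfl : x = y := Finset.mem_singleton.mp (hxy ▸ Finset.mem_singleton_self x)
    exact hy
  · intro hx; exact ⟨x, hx, rfl⟩

open Classical in
lemma myF_not_singleton {α : Type u} (A : Set α) (v : Finset α)
    (h : ∀ x, v ≠ {x}) : myF A v = 0 := by
  unfold myF
  rw [if_neg]
  rintro ⟨x, _, hx⟩
  exact h x hx

/-- G = { f : S → ℤ/2 : ker f ∈ 𝔇 } has cardinality exactly 2^λ, where λ
is the cardinality of the infinite type α, S = [λ]^{<ℵ₀} = `Finset α`, and
𝔇 is the filter generated by the cones ⟨u⟩ (i.e. `Filter.atTop`). -/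
theorem stmt3 {α : Type u} [Infinite α] :
    Cardinal.mk {f : Finset α → ZMod 2 // {u : Finset α | f u = 0} ∈ Filter.atTop}
      = 2 ^ Cardinal.mk α := by
  classical
  apply le_antisymm
  · have hinj : Function.Injective
        (fun f : {f : Finset α → ZMod 2 // {u : Finset α | f u = 0} ∈ Filter.atTop} =>
          {u : Finset α | f.1 u = 1}) := by
      rintro ⟨f, hf⟩ ⟨g, hg⟩ h
      simp only [Subtype.mk.injEq]
      funext u
      have h1 : f u = 1 ↔ g u = 1 := by
        simpa using Set.ext_iff.mp h u
      have hz : ∀ z : ZMod 2, z = 0 ∨ z = 1 := by decide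
      have hfu := hz (f u)
      have hgu := hz (g u)
      rcases hfu with h2 | h2 <;> rcases hgu with h3 | h3 <;>
        simp_all
    calc Cardinal.mk {f : Finset α → ZMod 2 // {u : Finset α | f u = 0} ∈ Filter.atTop}
        ≤ Cardinal.mk (Set (Finset α)) := Cardinal.mk_le_of_injective hinj
      _ = 2 ^ Cardinal.mk (Finset α) := Cardinal.mk_set
      _ = 2 ^ Cardinal.mk α := by rw [Cardinal.mk_finset_of_infinite]
  · rw [← Cardinal.mk_set (α := α)]
    obtain ⟨a, b, hab⟩ := exists_pair_ne α
    have hmem : ∀ A : Set α,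
        {u : Finset α | myF A u = 0} ∈ (Filter.atTop : Filter (Finset α)) := by
      intro A
      rw [Filter.mem_atTop_sets]
      refine ⟨({a, b} : Finset α), fun v hv => ?_⟩
      simp only [Set.mem_setOf_eq]
      apply myF_not_singleton
      rintro x rfl
      have ha : a ∈ ({x} : Finset α) := hv (by simp)
      have hb : b ∈ ({x} : Finset α) := hv (by simp)
      exact hab ((Finset.mem_singleton.mp ha).trans (Finset.mem_singleton.mp hb).symm)
    have hinj : Function.Injective
        (fun A : Set α =>
          (⟨myF A, hmem A⟩ :
            {f : Finset α → ZMod 2 // {u : Finset α | f u = 0} ∈ Filter.atTop})) := by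
      intro A B h
      ext x
      have := congrFun (congrArg Subtype.val h) {x}
      simp only [myF_singleton] at this
      by_cases hA : x ∈ A <;> by_cases hB : x ∈ B <;> simp_all
    exact Cardinal.mk_le_of_injective hinj
end

section
/- Let m < k, let A_∅ be a set and a₀,…,a_{m−1} distinct elements not in A_∅, and set A_s = A_∅ ∪ {a_t : t ∈ s} for s ⊊ {0,…,m−1}. If u ∈ [⋃_s A_s]^k is not contained in ⋃_s [A_s]^k and u ⊆ v with v ∈ [⋃_s A_s]^{k+1}, then there exists a k-element subset u' of v with u' ≠ u and u' ∉ ⋃_s [A_s]^k. -/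
/-- With A_s = A_∅ ∪ {a_t : t ∈ s} for proper s ⊆ {0,…,m−1}, m < k: if
u ∈ [⋃_s A_s]^k is contained in no A_s and u ⊆ v with v ∈ [⋃_s A_s]^{k+1},
then there is a k-element u' ⊆ v with u' ≠ u contained in no A_s. -/
theorem stmt9 {X : Type*} {k m : ℕ} (hmk : m < k)
    (A0 : Set X) (a : Fin m → X) (ha : Function.Injective a)
    (haA : ∀ t, a t ∉ A0)
    (A : Finset (Fin m) → Set X)
    (hA : ∀ s, A s = A0 ∪ (a '' ↑s))
    (u v : Finset X) (hu : u.card = k)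
    (husub : ↑u ⊆ ⋃ s ∈ {s : Finset (Fin m) | s ≠ Finset.univ}, A s)
    (hnot : ∀ s : Finset (Fin m), s ≠ Finset.univ → ¬(↑u ⊆ A s))
    (huv : u ⊆ v) (hv : v.card = k + 1)
    (hvsub : ↑v ⊆ ⋃ s ∈ {s : Finset (Fin m) | s ≠ Finset.univ}, A s) :
    ∃ u' : Finset X, u' ⊆ v ∧ u'.card = k ∧ u' ≠ u ∧
      ∀ s : Finset (Fin m), s ≠ Finset.univ → ¬(↑u' ⊆ A s) := by
  classical
  -- every a t belongs to u
  have hat : ∀ t : Fin m, a t ∈ u := by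
    intro t
    have hs : (Finset.univ.erase t) ≠ (Finset.univ : Finset (Fin m)) := by
      intro h
      have := Finset.mem_univ t
      rw [← h] at this
      exact (Finset.notMem_erase t _) this
    obtain ⟨x, hxu, hxA⟩ := Set.not_subset.1 (hnot _ hs)
    have hx' := husub hxu
    simp only [Set.mem_iUnion, Set.mem_setOf_eq] at hx'
    obtain ⟨s', hs', hxs'⟩ := hx'
    rw [hA] at hxs'
    rcases hxs' with hx0 | ⟨t', _, rfl⟩
    · exact absurd (by rw [hA]; exact Or.inl hx0) hxA
    · by_cases htt : t' = t
      · subst htt; exact hxu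
      · exfalso
        apply hxA
        rw [hA]
        exact Or.inr ⟨t', by simp [htt], rfl⟩
  -- pick y ∈ u not of the form a t
  have himg : ¬ (u ⊆ Finset.image a Finset.univ) := by
    intro h
    have := Finset.card_le_card h
    have hle : (Finset.image a Finset.univ).card ≤ m := by
      simpa using Finset.card_image_le (s := (Finset.univ : Finset (Fin m))) (f := a)
    omega
  obtain ⟨y, hyu, hynot⟩ := Finset.not_subset.1 himg
  have hy : ∀ t : Fin m, y ≠ a t := by
    intro t h
    exact hynot (Finset.mem_image.2 ⟨t, Finset.mem_univ t, h.symm⟩)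
  -- pick x ∈ v \ u
  have hss : u ⊂ v := by
    refine Finset.ssubset_iff_subset_ne.2 <| And.intro huv ?_
    intro h; rw [h] at hu; omega
  obtain ⟨x, hxv, hxu⟩ := Finset.exists_of_ssubset hss
  refine ⟨v.erase y, Finset.erase_subset _ _, ?_, ?_, ?_⟩
  · rw [Finset.card_erase_of_mem (huv hyu), hv]; omega
  · intro h
    have hx : x ∈ v.erase y :=
      Finset.mem_erase.2 ⟨fun hxy => hxu (hxy ▸ hyu), hxv⟩
    rw [h] at hx
    exact hxu hx
  · intro s hs hsub
    obtain ⟨t, htuniv, hts⟩ := Finset.exists_of_ssubset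
      (Finset.ssubset_iff_subset_ne.2 <| And.intro (Finset.subset_univ s) hs)
    have hmem : a t ∈ v.erase y :=
      Finset.mem_erase.2 ⟨fun h => hy t h.symm, huv (hat t)⟩
    have := hsub hmem
    rw [hA] at this
    rcases this with h0 | ⟨t', ht', heq⟩
    · exact haA t h0
    · exact hts (by rwa [ha heq] at ht')
end
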